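/- For any positive integers n and K, if f_{k,i} ≥ 0 for all k = 1,…,K and i = 1,…,n, then the ensemble exponential loss satisfies L^exp = (1/n) Σ_{i=1}^n exp(−(1/K) Σ_{k=1}^K f_{k,i}) ≤ Π_{k=1}^K R_k^{1/K} ≤ 1, where R_k = (1/n) Σ_{i=1}^n exp(−f_{k,i}). -/

import Mathlib

/-!
Writing `exp (-(1/K) ∑ₖ fₖᵢ) = ∏ₖ (exp (-fₖᵢ)) ^ (1/K)`, the first inequality is the
finite Hölder inequality `∑ᵢ ∏ₖ gₖᵢ ^ wₖ ≤ ∏ₖ (∑ᵢ gₖᵢ) ^ wₖ` for weights summing to one,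
which follows from the weighted AM-GM inequality after normalising each `gₖ` to total mass one.
The second inequality holds because nonnegative scores give `exp (-fₖᵢ) ≤ 1`, so each `Rₖ ≤ 1`.
-/

open Real Finset

namespace Real

variable {ι κ : Type*} (s : Finset ι) {t : Finset κ} {w : κ → ℝ} {g : κ → ι → ℝ}

theorem sum_prod_rpow_le_one_of_sum_le_one (hw : ∀ k ∈ t, 0 ≤ w k)
    (hw₁ : ∑ k ∈ t, w k = 1) (hg : ∀ k ∈ t, ∀ i ∈ s, 0 ≤ g k i)
    (hg₁ : ∀ k ∈ t, ∑ i ∈ s, g k i ≤ 1) :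
    ∑ i ∈ s, ∏ k ∈ t, g k i ^ w k ≤ 1 :=
  calc ∑ i ∈ s, ∏ k ∈ t, g k i ^ w k
      ≤ ∑ i ∈ s, ∑ k ∈ t, w k * g k i :=
        sum_le_sum fun i hi =>
          geom_mean_le_arith_mean_weighted t w (g · i) hw hw₁ fun k hk => hg k hk i hi
    _ = ∑ k ∈ t, w k * ∑ i ∈ s, g k i := by
        rw [sum_comm]
        simp_rw [mul_sum]
    _ ≤ ∑ k ∈ t, w k := sum_le_sum fun k hk => mul_le_of_le_one_right (hw k hk) (hg₁ k hk)
    _ = 1 := hw₁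

theorem sum_prod_rpow_le_prod_sum_rpow (hw : ∀ k ∈ t, 0 ≤ w k)
    (hw₁ : ∑ k ∈ t, w k = 1) (hg : ∀ k ∈ t, ∀ i ∈ s, 0 ≤ g k i) :
    ∑ i ∈ s, ∏ k ∈ t, g k i ^ w k ≤ ∏ k ∈ t, (∑ i ∈ s, g k i) ^ w k := by
  set S : κ → ℝ := fun k => ∑ i ∈ s, g k i
  have hS : ∀ k ∈ t, 0 ≤ S k := fun k hk => sum_nonneg (hg k hk)
  rcases (prod_nonneg fun k hk => rpow_nonneg (hS k hk) (w k)).eq_or_lt with hP | hP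
  · -- some `S k` with positive weight vanishes, so every summand on the left has a zero factor
    obtain ⟨k, hk, hSk⟩ := prod_eq_zero_iff.mp hP.symm
    obtain ⟨hSk, hwk⟩ := (rpow_eq_zero_iff_of_nonneg (hS k hk)).mp hSk
    have hgk : ∀ i ∈ s, g k i = 0 := (sum_eq_zero_iff_of_nonneg (hg k hk)).mp hSk
    rw [← hP]
    refine (sum_eq_zero fun i hi => prod_eq_zero hk ?_).le
    rw [hgk i hi, zero_rpow hwk]
  · have hnormalized := sum_prod_rpow_le_one_of_sum_le_one s hw hw₁
      (g := fun k i => g k i / S k) (fun k hk i hi => div_nonneg (hg k hk i hi) (hS k hk))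
      fun k _ => by simpa only [← sum_div] using div_self_le_one (S k)
    have hexpand : ∀ i ∈ s, ∏ k ∈ t, (g k i / S k) ^ w k =
        (∏ k ∈ t, g k i ^ w k) / ∏ k ∈ t, S k ^ w k := fun i hi => by
      rw [← prod_div_distrib]
      exact prod_congr rfl fun k hk => div_rpow (hg k hk i hi) (hS k hk) _
    rwa [sum_congr rfl hexpand, ← sum_div, div_le_one hP] at hnormalized

theorem prod_mul_rpow_of_sum_eq_one {c : ℝ} (hc : 0 ≤ c) {x : κ → ℝ} (hx : ∀ k ∈ t, 0 ≤ x k)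
    (hw : ∀ k ∈ t, 0 ≤ w k) (hw₁ : ∑ k ∈ t, w k = 1) :
    ∏ k ∈ t, (c * x k) ^ w k = c * ∏ k ∈ t, x k ^ w k := by
  rw [prod_congr rfl fun k hk => mul_rpow hc (hx k hk), prod_mul_distrib,
    ← rpow_sum_of_nonneg hc hw, hw₁, rpow_one]

theorem exp_neg_mul_sum (t : Finset κ) (c : ℝ) (f : κ → ℝ) :
    exp (-(c * ∑ k ∈ t, f k)) = ∏ k ∈ t, exp (-f k) ^ c := by
  simp_rw [← exp_mul, ← exp_sum, mul_sum, ← sum_neg_distrib, neg_mul, mul_comm]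

end Real

theorem ensemble_exp_loss_bound_le_one_general
    (n K : ℕ) (hK : 0 < K) (f : Fin K → Fin n → ℝ)
    (hf : ∀ k i, 0 ≤ f k i) :
    (1 / (n : ℝ)) * ∑ i : Fin n, Real.exp (-( (1 / (K : ℝ)) * ∑ k : Fin K, f k i)) ≤
      ∏ k : Fin K, ((1 / (n : ℝ)) * ∑ i : Fin n, Real.exp (-(f k i))) ^ ((1 : ℝ) / K) ∧
    ∏ k : Fin K, ((1 / (n : ℝ)) * ∑ i : Fin n, Real.exp (-(f k i))) ^ ((1 : ℝ) / K) ≤ 1 := by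
  have hw₁ : ∑ _k : Fin K, (1 : ℝ) / K = 1 := by
    rw [sum_const, card_univ, Fintype.card_fin, nsmul_eq_mul, mul_one_div_cancel (by positivity)]
  refine ⟨?_, ?_⟩
  · rw [prod_mul_rpow_of_sum_eq_one (by positivity) (fun k _ => by positivity)
      (fun _ _ => by positivity) hw₁]
    simp_rw [exp_neg_mul_sum]
    gcongr
    exact sum_prod_rpow_le_prod_sum_rpow _ (fun _ _ => by positivity) hw₁
      fun _ _ _ _ => (exp_pos _).le
  · refine prod_le_one (fun _ _ => by positivity) fun k _ =>
      rpow_le_one (by positivity) ?_ (by positivity)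
    rw [one_div]
    refine inv_mul_le_one_of_le₀ ?_ n.cast_nonneg
    calc ∑ i, exp (-f k i) ≤ ∑ _i : Fin n, (1 : ℝ) :=
          sum_le_sum fun i _ => exp_le_one_iff.mpr (neg_nonpos.mpr (hf k i))
      _ = n := by simp

/-- With nonnegative scores, the ensemble exponential loss is bounded by the geometric
mean of the snapshot losses, which in turn is at most 1. -/
theorem ensemble_exp_loss_bound_le_one
    (n K : ℕ) (hn : 0 < n) (hK : 0 < K) (f : Fin K → Fin n → ℝ)
    (hf : ∀ k i, 0 ≤ f k i) :
    (1 / (n : ℝ)) * ∑ i : Fin n, Real.exp (-( (1 / (K : ℝ)) * ∑ k : Fin K, f k i)) ≤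
      ∏ k : Fin K, ((1 / (n : ℝ)) * ∑ i : Fin n, Real.exp (-(f k i))) ^ ((1 : ℝ) / K) ∧
    ∏ k : Fin K, ((1 / (n : ℝ)) * ∑ i : Fin n, Real.exp (-(f k i))) ^ ((1 : ℝ) / K) ≤ 1 :=
  ensemble_exp_loss_bound_le_one_general n K hK f hf
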